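/- In ℓ¹(ℕ) with canonical basis (e_n), let α(t) = t for t ∈ [0,1/2] and α(t) = 1−t for t ∈ [1/2,1], let S_n := {t·e₁ + α(t)·e_{n+1} : t ∈ [0,1]} for n ≥ 1, let x_n := (1/2 − 1/2ⁿ)·e₁ and x_∞ := (1/2)·e₁, and let X := ⋃_{n≥1}(2^{−(n+1)}·S_n + x_n) ∪ {x_∞}, endowed with the metric d inherited from the ℓ¹ norm. Then: (i) (X,d) is compact; (ii) (X,d) is 2-quasiconvex, i.e. d_I(x,y) ≤ 2·d(x,y) for all x,y ∈ X; (iii) (X,d) fails to be an eikonal space: for every nonempty open Ω ⊊ X with x_∞ ∈ Ω, every bounded continuous ℓ : Ω → ℝ with inf_Ω ℓ > 0 and every continuous g : ∂Ω → ℝ such that (ℓ,g) satisfies (CC), the slope eikonal equation on Ω with data (ℓ,g) admits no continuous pointwise solution. -/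

import Mathlib

open Filter Topology Set MeasureTheory
open scoped ENNReal NNReal

/-- The local (descent) slope of `u` at `x`, relative to the ambient set `A`. -/
noncomputable def locSlopeOn {X : Type*} [PseudoMetricSpace X] (u : X → ℝ) (A : Set X) (x : X) :
    ℝ≥0∞ :=
  Filter.limsup (fun y => ENNReal.ofReal (max (u x - u y) 0 / dist x y)) (𝓝[A \ {x}] x)

/-- The local (descent) slope of `u` at `x`. -/
noncomputable def locSlope {X : Type*} [PseudoMetricSpace X] (u : X → ℝ) (x : X) : ℝ≥0∞ :=
  locSlopeOn u Set.univ x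

/-- The intrinsic (length) distance between two points. -/
noncomputable def intrinsicDist {X : Type*} [PseudoMetricSpace X] (x y : X) : ℝ≥0∞ :=
  ⨅ (T : ℝ) (_ : 0 ≤ T) (γ : ℝ → X) (_ : ContinuousOn γ (Set.Icc 0 T))
    (_ : γ 0 = x) (_ : γ T = y), eVariationOn γ (Set.Icc 0 T)

/-- Compatibility condition (CC). -/
def SatisfiesCC {X : Type*} [PseudoMetricSpace X] (Ω : Set X) (ℓ g : X → ℝ) : Prop :=
  ∀ x ∈ frontier Ω, ∀ y ∈ frontier Ω, ∀ T > (0:ℝ), ∀ γ : ℝ → X,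
    LipschitzOnWith 1 γ (Set.Icc 0 T) → Set.MapsTo γ (Set.Icc 0 T) (closure Ω) →
    γ 0 = y → γ T = x → Set.MapsTo γ (Set.Ioo 0 T) Ω →
    g x - g y ≤ ∫ t in (0:ℝ)..T, ℓ (γ t)

/-- Continuous pointwise solution of the slope eikonal equation. -/
def IsEikonalSol {X : Type*} [PseudoMetricSpace X] (Ω : Set X) (ℓ g u : X → ℝ) : Prop :=
  ContinuousOn u (closure Ω) ∧
  (∀ x ∈ Ω, locSlopeOn u (closure Ω) x = ENNReal.ofReal (ℓ x)) ∧
  ∀ x ∈ frontier Ω, u x = g x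

/-- Eikonal space. -/
def IsEikonalSpace (X : Type*) [MetricSpace X] : Prop :=
  ∀ Ω : Set X, IsOpen Ω → Ω.Nonempty → Ω ≠ Set.univ →
    ∀ ℓ g : X → ℝ, ContinuousOn ℓ Ω → (∃ M, ∀ x ∈ Ω, |ℓ x| ≤ M) →
      (∃ c > 0, ∀ x ∈ Ω, c ≤ ℓ x) → ContinuousOn g (frontier Ω) →
      SatisfiesCC Ω ℓ g → ∃ u : X → ℝ, IsEikonalSol Ω ℓ g u

/-- The `E_{1,0}` property. -/
def HasE10 (X : Type*) [MetricSpace X] : Prop :=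
  ∀ K : Set X, IsClosed K → K.Nonempty →
    ∃ u : X → ℝ, Continuous u ∧ (∀ x ∉ K, locSlope u x = 1) ∧ ∀ x ∈ K, u x = 0

instance : Fact ((1:ℝ≥0∞) ≤ 1) := ⟨le_rfl⟩

/-- The space `ℓ¹(ℕ)` of absolutely summable real sequences. -/
noncomputable abbrev ellOne : Type := lp (fun _ : ℕ => ℝ) 1

/-- The canonical basis vectors of `ℓ¹(ℕ)`. -/
noncomputable def e (i : ℕ) : ellOne := lp.single 1 i 1

/-- `α(t) = t` on `[0,1/2]` and `α(t) = 1 − t` on `[1/2,1]`. -/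
noncomputable def alphaFn (t : ℝ) : ℝ := min t (1 - t)

/-- The tent `S_n = {t·e₁ + α(t)·e_{n+1} : t ∈ [0,1]}` (here `e 0` plays the role of `e₁` and
`e n`, `n ≥ 1`, the role of `e_{n+1}`). -/
noncomputable def Sset (n : ℕ) : Set ellOne :=
  (fun t : ℝ => t • e 0 + alphaFn t • e n) '' Set.Icc 0 1

/-- The points `x_n = (1/2 − 1/2ⁿ)·e₁`. -/
noncomputable def xpt (n : ℕ) : ellOne := ((1:ℝ)/2 - 1/2^n) • e 0

/-- The limit point `x_∞ = (1/2)·e₁`. -/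
noncomputable def xInf : ellOne := ((1:ℝ)/2) • e 0

/-- The set `X = ⋃_{n ≥ 1} (2^{−(n+1)}·S_n + x_n) ∪ {x_∞}`. -/
noncomputable def Xset : Set ellOne :=
  (⋃ n ∈ {n : ℕ | 1 ≤ n}, (fun s => ((1:ℝ)/2^(n+1)) • s + xpt n) '' Sset n) ∪ {xInf}

lemma e_apply (i m : ℕ) : (e i : ∀ _ : ℕ, ℝ) m = if m = i then 1 else 0 := by
  unfold e
  rcases eq_or_ne m i with h | h
  · subst h; rw [lp.single_apply_self, if_pos rfl]
  · rw [lp.single_apply_ne _ _ _ h, if_neg h]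

lemma coord3 (a b c : ℝ) (i j k m : ℕ) :
    ((a • e i + b • e j + c • e k : ellOne) : ∀ _ : ℕ, ℝ) m =
      (if m = i then a else 0) + (if m = j then b else 0) + (if m = k then c else 0) := by
  have : ((a • e i + b • e j + c • e k : ellOne) : ∀ _ : ℕ, ℝ) m
      = a * (e i : ∀ _ : ℕ, ℝ) m + b * (e j : ∀ _ : ℕ, ℝ) m + c * (e k : ∀ _ : ℕ, ℝ) m := by
    simp [lp.coeFn_add, lp.coeFn_smul]
    rfl
  rw [this, e_apply, e_apply, e_apply]
  split_ifs <;> ring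

lemma norm3 {i j k : ℕ} (hij : i ≠ j) (hik : i ≠ k) (hjk : j ≠ k) (a b c : ℝ) :
    ‖(a • e i + b • e j + c • e k : ellOne)‖ = |a| + |b| + |c| := by
  set f : ellOne := a • e i + b • e j + c • e k with hf
  have hp : (0:ℝ) < (1 : ℝ≥0∞).toReal := by simp
  rw [lp.norm_eq_tsum_rpow hp]
  have hcoord : ∀ m, ‖(f : ∀ _ : ℕ, ℝ) m‖ ^ ((1:ℝ≥0∞).toReal)
      = |(if m = i then a else 0) + (if m = j then b else 0) + (if m = k then c else 0)| := by
    intro m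
    rw [coord3]
    simp [Real.norm_eq_abs]
  have hzero : ∀ m ∉ ({i, j, k} : Finset ℕ),
      ‖(f : ∀ _ : ℕ, ℝ) m‖ ^ ((1:ℝ≥0∞).toReal) = 0 := by
    intro m hm
    simp only [Finset.mem_insert, Finset.mem_singleton, not_or] at hm
    rw [hcoord, if_neg hm.1, if_neg hm.2.1, if_neg hm.2.2]
    simp
  rw [tsum_eq_sum hzero]
  have h1 : (i:ℕ) ∉ ({j, k} : Finset ℕ) := by simp [hij, hik]
  have h2 : (j:ℕ) ∉ ({k} : Finset ℕ) := by simp [hjk]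
  rw [show ({i, j, k} : Finset ℕ) = insert i {j, k} from rfl, Finset.sum_insert h1,
    Finset.sum_insert h2, Finset.sum_singleton]
  rw [hcoord, hcoord, hcoord]
  simp only [if_pos rfl, if_neg hij, if_neg hik, if_neg hjk, if_neg hij.symm, if_neg hik.symm,
    if_neg hjk.symm, add_zero, zero_add, if_true, ENNReal.toReal_one, one_div_one, inv_one,
    Real.rpow_one, add_assoc]
lemma norm2 {i j : ℕ} (hij : i ≠ j) (a b : ℝ) : ‖(a • e i + b • e j : ellOne)‖ = |a| + |b| := by
  have h := norm3 (i := i) (j := j) (k := max i j + 1) hij (by omega) (by omega) a b 0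
  simpa using h

lemma norm1 (i : ℕ) (a : ℝ) : ‖(a • e i : ellOne)‖ = |a| := by
  have h := norm2 (i := i) (j := i + 1) (by omega) a 0
  simpa using h

lemma dist_same {n : ℕ} (hn : n ≠ 0) (x h x' h' : ℝ) :
    dist (x • e 0 + h • e n) (x' • e 0 + h' • e n : ellOne) = |x - x'| + |h - h'| := by
  rw [dist_eq_norm]
  have heq : (x • e 0 + h • e n) - (x' • e 0 + h' • e n)
      = (x - x') • e 0 + (h - h') • e n := by
    rw [sub_smul, sub_smul]; abel
  rw [heq, norm2 (Ne.symm hn)]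

lemma dist_diff {n m : ℕ} (hn : n ≠ 0) (hm : m ≠ 0) (hnm : n ≠ m) (x h x' h' : ℝ) :
    dist (x • e 0 + h • e n) (x' • e 0 + h' • e m : ellOne) = |x - x'| + |h| + |h'| := by
  rw [dist_eq_norm]
  have heq : (x • e 0 + h • e n) - (x' • e 0 + h' • e m)
      = (x - x') • e 0 + h • e n + (-h') • e m := by
    rw [sub_smul, neg_smul]; abel
  rw [heq, norm3 (Ne.symm hn) (Ne.symm hm) hnm, abs_neg]

/-- junction points -/
noncomputable def Lx (n : ℕ) : ℝ := 1/2 - (1/2)^n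

noncomputable def nIdx (x : ℝ) : ℕ := max 1 (Int.toNat ⌊Real.logb 2 ((1:ℝ)/2 - x)⁻¹⌋)

noncomputable def hFn (x : ℝ) : ℝ := max 0 (min (x - Lx (nIdx x)) (Lx (nIdx x + 1) - x))

noncomputable def Phi (x : ℝ) : ellOne := x • e 0 + hFn x • e (nIdx x)

lemma Lx_lt (n : ℕ) : Lx n < Lx (n+1) := by
  have : ((1:ℝ)/2)^(n+1) < (1/2)^n := by
    apply pow_lt_pow_right_of_lt_one₀ (by norm_num) (by norm_num) (by omega)
  unfold Lx; linarith

lemma Lx_mono : StrictMono Lx := strictMono_nat_of_lt_succ Lx_lt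

lemma Lx_lt_half (n : ℕ) : Lx n < 1/2 := by
  unfold Lx
  have : (0:ℝ) < (1/2)^n := by positivity
  linarith

lemma Lx_one : Lx 1 = 0 := by norm_num [Lx]

lemma Lx_nonneg {n : ℕ} (hn : 1 ≤ n) : 0 ≤ Lx n := by
  rw [← Lx_one]; exact Lx_mono.monotone hn

lemma Lx_gap (n : ℕ) : Lx (n+1) - Lx n = (1/2)^(n+1) := by
  unfold Lx; rw [pow_succ]; ring

lemma Lx_half_gap (n : ℕ) : (1/2 : ℝ) - Lx n = (1/2)^n := by unfold Lx; ring

lemma nIdx_spec {n : ℕ} {x : ℝ} (hn : 1 ≤ n) (h1 : Lx n ≤ x) (h2 : x < Lx (n+1)) :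
    nIdx x = n := by
  set y : ℝ := 1/2 - x with hy
  have hy1 : y ≤ (1/2)^n := by rw [hy]; unfold Lx at h1; linarith
  have hy2 : ((1:ℝ)/2)^(n+1) < y := by rw [hy]; unfold Lx at h2; linarith
  have hypos : 0 < y := lt_trans (by positivity) hy2
  have hinv1 : (2:ℝ)^(n:ℝ) ≤ y⁻¹ := by
    rw [Real.rpow_natCast]
    rw [show ((2:ℝ))^n = ((1/2:ℝ)^n)⁻¹ by rw [← inv_pow]; norm_num]
    exact inv_anti₀ hypos hy1
  have hinv2 : y⁻¹ < (2:ℝ)^((n:ℝ)+1) := by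
    rw [show ((n:ℝ)+1) = ((n+1 : ℕ):ℝ) by push_cast; ring, Real.rpow_natCast]
    rw [show ((2:ℝ))^(n+1) = ((1/2:ℝ)^(n+1))⁻¹ by rw [← inv_pow]; norm_num]
    exact (inv_strictAnti₀ (by positivity) hy2)
  set r : ℝ := Real.logb 2 y⁻¹ with hrdef
  have hyr : y⁻¹ = (2:ℝ) ^ r := by
    rw [hrdef, Real.rpow_logb (by norm_num) (by norm_num) (by positivity)]
  have hfl : ⌊r⌋ = (n:ℤ) := by
    rw [Int.floor_eq_iff]
    constructor
    · push_cast
      have : (2:ℝ)^((n:ℕ):ℝ) ≤ (2:ℝ)^r := by rw [← hyr]; exact hinv1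
      exact (Real.rpow_le_rpow_left_iff (by norm_num)).mp this
    · push_cast
      have : (2:ℝ)^r < (2:ℝ)^((n:ℝ)+1) := by rw [← hyr]; exact hinv2
      exact (Real.rpow_lt_rpow_left_iff (by norm_num)).mp this
  unfold nIdx
  rw [← hy, ← hrdef, hfl]
  simp [hn]

lemma nIdx_exists {x : ℝ} (h0 : 0 ≤ x) (h2 : x < 1/2) :
    1 ≤ nIdx x ∧ Lx (nIdx x) ≤ x ∧ x < Lx (nIdx x + 1) := by
  set y : ℝ := 1/2 - x with hy
  have hypos : 0 < y := by rw [hy]; linarith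
  have hyle : y ≤ 1/2 := by rw [hy]; linarith
  have hinvpos : 0 < y⁻¹ := by positivity
  have hinv2le : (2:ℝ) ≤ y⁻¹ := by
    rw [show (2:ℝ) = ((1/2:ℝ))⁻¹ by norm_num]
    exact inv_anti₀ hypos hyle
  set r : ℝ := Real.logb 2 y⁻¹ with hr
  have hyr : y⁻¹ = (2:ℝ) ^ r := by
    rw [hr, Real.rpow_logb (by norm_num) (by norm_num) hinvpos]
  have hr1 : 1 ≤ r := by
    have : (2:ℝ)^(1:ℝ) ≤ (2:ℝ)^r := by
      rw [← hyr, Real.rpow_one]; exact hinv2le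
    exact (Real.rpow_le_rpow_left_iff (by norm_num)).mp this
  have hfl1 : 1 ≤ ⌊r⌋ := by
    rw [Int.le_floor]; exact_mod_cast hr1
  have hto : nIdx x = Int.toNat ⌊r⌋ := by
    unfold nIdx
    rw [← hy, ← hr]
    omega
  have htn : ((⌊r⌋.toNat : ℤ)) = ⌊r⌋ := Int.toNat_of_nonneg (by omega)
  have hcast : ((nIdx x : ℕ) : ℝ) = ((⌊r⌋ : ℤ) : ℝ) := by
    rw [hto]; exact_mod_cast htn
  have hle : ((nIdx x : ℕ) : ℝ) ≤ r := by rw [hcast]; exact Int.floor_le r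
  have hlt : r < ((nIdx x : ℕ) : ℝ) + 1 := by rw [hcast]; exact Int.lt_floor_add_one r
  have k1 : (2:ℝ)^((nIdx x : ℕ):ℝ) ≤ y⁻¹ := by
    rw [hyr]
    exact Real.rpow_le_rpow_of_exponent_le (by norm_num) hle
  have k2 : y⁻¹ < (2:ℝ)^(((nIdx x : ℕ):ℝ)+1) := by
    rw [hyr]
    exact Real.rpow_lt_rpow_of_exponent_lt (by norm_num) hlt
  have e1 : (2:ℝ)^((nIdx x : ℕ):ℝ) = ((1/2:ℝ)^(nIdx x))⁻¹ := by
    rw [Real.rpow_natCast, ← inv_pow]; norm_num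
  have e2 : (2:ℝ)^(((nIdx x : ℕ):ℝ)+1) = ((1/2:ℝ)^(nIdx x + 1))⁻¹ := by
    rw [show (((nIdx x : ℕ):ℝ)+1) = ((nIdx x + 1 : ℕ):ℝ) by push_cast; ring,
      Real.rpow_natCast, ← inv_pow]
    norm_num
  rw [e1] at k1; rw [e2] at k2
  have hy1 : y ≤ (1/2)^(nIdx x) := by
    have := inv_anti₀ (by positivity) k1
    simp only [inv_inv] at this
    exact this
  have hy2 : ((1/2:ℝ))^(nIdx x + 1) < y := by
    have := inv_strictAnti₀ (by positivity) k2
    simp only [inv_inv] at this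
    exact this
  refine ⟨by rw [hto]; omega, ?_, ?_⟩
  · unfold Lx; rw [hy] at hy1; linarith
  · unfold Lx; rw [hy] at hy2; linarith

lemma nIdx_half : nIdx (1/2) = 1 := by
  unfold nIdx
  norm_num

lemma hFn_half : hFn (1/2) = 0 := by
  unfold hFn
  rw [nIdx_half]
  norm_num [Lx]

lemma Phi_half : Phi (1/2) = xInf := by
  unfold Phi
  rw [hFn_half, zero_smul, add_zero]
  rfl

lemma hFn_eq {x : ℝ} (h0 : 0 ≤ x) (h2 : x < 1/2) :
    hFn x = min (x - Lx (nIdx x)) (Lx (nIdx x + 1) - x) := by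
  obtain ⟨-, hL, hR⟩ := nIdx_exists h0 h2
  unfold hFn
  rw [max_eq_right]
  exact le_min (by linarith) (by linarith)

lemma hFn_nonneg (x : ℝ) : 0 ≤ hFn x := le_max_left _ _
lemma nIdx_ne_zero (x : ℝ) : nIdx x ≠ 0 := by unfold nIdx; omega

lemma dist_Phi_same {x x' : ℝ} (h : nIdx x = nIdx x') :
    dist (Phi x) (Phi x') = |x - x'| + |hFn x - hFn x'| := by
  unfold Phi
  rw [← h, dist_same (nIdx_ne_zero x)]

lemma dist_Phi_diff {x x' : ℝ} (h : nIdx x ≠ nIdx x') :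
    dist (Phi x) (Phi x') = |x - x'| + hFn x + hFn x' := by
  unfold Phi
  rw [dist_diff (nIdx_ne_zero x) (nIdx_ne_zero x') h,
    abs_of_nonneg (hFn_nonneg x), abs_of_nonneg (hFn_nonneg x')]

lemma dist_Phi_ge (x x' : ℝ) : |x - x'| ≤ dist (Phi x) (Phi x') := by
  rcases eq_or_ne (nIdx x) (nIdx x') with h | h
  · rw [dist_Phi_same h]
    have := abs_nonneg (hFn x - hFn x'); linarith
  · rw [dist_Phi_diff h]
    have := hFn_nonneg x; have := hFn_nonneg x'; linarith

lemma hFn_le_left {x : ℝ} (h0 : 0 ≤ x) (h2 : x < 1/2) : hFn x ≤ x - Lx (nIdx x) := by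
  rw [hFn_eq h0 h2]; exact min_le_left _ _

lemma hFn_le_right {x : ℝ} (h0 : 0 ≤ x) (h2 : x < 1/2) : hFn x ≤ Lx (nIdx x + 1) - x := by
  rw [hFn_eq h0 h2]; exact min_le_right _ _

lemma hFn_le_right' {x : ℝ} (h0 : 0 ≤ x) (h2 : x ≤ 1/2) : hFn x ≤ 1/2 - x := by
  rcases eq_or_lt_of_le h2 with rfl | hlt
  · rw [hFn_half]; norm_num
  · exact le_trans (hFn_le_right h0 hlt) (by have := Lx_lt_half (nIdx x + 1); linarith)

lemma nIdx_lt_of_lt {x x' : ℝ} (h0 : 0 ≤ x) (h2 : x < 1/2) (h0' : 0 ≤ x') (h2' : x' < 1/2)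
    (hne : nIdx x ≠ nIdx x') (hxx : x < x') : nIdx x < nIdx x' := by
  by_contra hge
  have hlt : nIdx x' < nIdx x := by omega
  have k1 := (nIdx_exists h0' h2').2.2
  have k2 := (nIdx_exists h0 h2).2.1
  have : Lx (nIdx x' + 1) ≤ Lx (nIdx x) := Lx_mono.monotone (by omega)
  linarith

/-- `Phi` is 2-Lipschitz -/
lemma dist_Phi_le {x x' : ℝ} (hx : x ∈ Icc (0:ℝ) (1/2)) (hx' : x' ∈ Icc (0:ℝ) (1/2)) :
    dist (Phi x) (Phi x') ≤ 2 * |x - x'| := by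
  wlog hxx : x ≤ x' generalizing x x'
  · rw [dist_comm, abs_sub_comm]
    exact this hx' hx (le_of_not_ge hxx)
  obtain ⟨h0, h2⟩ := hx
  obtain ⟨h0', h2'⟩ := hx'
  rcases eq_or_ne (nIdx x) (nIdx x') with h | h
  · rw [dist_Phi_same h]
    have habs : |hFn x - hFn x'| ≤ |x - x'| := by
      rcases eq_or_lt_of_le h2 with heq | hlt
      · have hx'' : x' = 1/2 := le_antisymm h2' (heq ▸ hxx)
        rw [heq, hx'']; simp
      rcases eq_or_lt_of_le h2' with heq' | hlt'
      · rw [heq', hFn_half, sub_zero, abs_of_nonneg (hFn_nonneg x),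
          abs_of_nonpos (by linarith : x - 1/2 ≤ 0)]
        have := hFn_le_right' h0 h2
        linarith
      · rw [hFn_eq h0 hlt, hFn_eq h0' hlt', h]
        refine le_trans (abs_min_sub_min_le_max _ _ _ _) (max_le ?_ ?_)
        · rw [show x - Lx (nIdx x') - (x' - Lx (nIdx x')) = x - x' by ring]
        · rw [show Lx (nIdx x' + 1) - x - (Lx (nIdx x' + 1) - x') = x' - x by ring,
            abs_sub_comm]
    have h1 := abs_nonneg (x - x')
    linarith
  · rw [dist_Phi_diff h]
    have hxx' : x < x' := by
      rcases eq_or_lt_of_le hxx with heq | h'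
      · exact absurd (heq ▸ rfl) h
      · exact h'
    have hlt : x < 1/2 := lt_of_lt_of_le hxx' h2'
    have hbx : hFn x ≤ Lx (nIdx x + 1) - x := hFn_le_right h0 hlt
    have habs : |x - x'| = x' - x := by rw [abs_sub_comm, abs_of_nonneg (by linarith)]
    rcases eq_or_lt_of_le h2' with heq' | hlt'
    · rw [heq'] at habs ⊢
      rw [hFn_half, habs]
      have := Lx_lt_half (nIdx x + 1)
      linarith
    · have hmn : nIdx x < nIdx x' := nIdx_lt_of_lt h0 hlt h0' hlt' h hxx'
      have hbx' : hFn x' ≤ x' - Lx (nIdx x') := hFn_le_left h0' hlt'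
      have hmono : Lx (nIdx x + 1) ≤ Lx (nIdx x') := Lx_mono.monotone (by omega)
      rw [habs]
      linarith

/-- expansion of the tent points -/
lemma tent_expand (n : ℕ) (t : ℝ) :
    ((1:ℝ)/2^(n+1)) • (t • e 0 + alphaFn t • e n) + xpt n
      = (Lx n + (1/2)^(n+1) * t) • e 0 + ((1/2)^(n+1) * alphaFn t) • e n := by
  have hp : ((1:ℝ)/2)^(n+1) = 1/2^(n+1) := by rw [div_pow, one_pow]
  have hp' : ((1:ℝ)/2)^n = 1/2^n := by rw [div_pow, one_pow]
  unfold xpt Lx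
  rw [smul_add, smul_smul, smul_smul, hp, hp', add_smul]
  abel

lemma sigma_min (n : ℕ) (t : ℝ) :
    ((1:ℝ)/2)^(n+1) * alphaFn t = min ((1/2)^(n+1) * t) ((1/2)^(n+1) * (1 - t)) := by
  unfold alphaFn
  exact mul_min_of_nonneg _ _ (by positivity)

lemma hFn_Lx {n : ℕ} (hn : 1 ≤ n) : hFn (Lx n) = 0 := by
  have h2 : Lx n < 1/2 := Lx_lt_half n
  have h0 : 0 ≤ Lx n := Lx_nonneg hn
  rw [hFn_eq h0 h2, nIdx_spec hn (le_refl _) (Lx_lt n)]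
  rw [min_eq_left (by linarith [Lx_lt n])]
  ring

lemma Phi_Lx {n : ℕ} (hn : 1 ≤ n) : Phi (Lx n) = (Lx n) • e 0 := by
  unfold Phi
  rw [hFn_Lx hn, zero_smul, add_zero]

lemma Xset_eq : Xset = Phi '' Icc (0:ℝ) (1/2) := by
  have halpha1 : alphaFn 1 = 0 := by unfold alphaFn; norm_num
  ext y
  constructor
  · rintro (hy | hy)
    · simp only [mem_iUnion, mem_setOf_eq] at hy
      obtain ⟨n, hn, s, hs, rfl⟩ := hy
      obtain ⟨t, ht, rfl⟩ := hs
      show ((1:ℝ)/2^(n+1)) • (t • e 0 + alphaFn t • e n) + xpt n ∈ Phi '' Icc (0:ℝ) (1/2)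
      rw [tent_expand]
      have hσpos : (0:ℝ) < (1/2)^(n+1) := by positivity
      have hgap := Lx_gap n
      rcases eq_or_lt_of_le ht.2 with ht1 | ht1
      · subst ht1
        refine ⟨Lx (n+1), ⟨Lx_nonneg (by omega), le_of_lt (Lx_lt_half (n+1))⟩, ?_⟩
        rw [Phi_Lx (by omega : 1 ≤ n + 1), halpha1, mul_zero, zero_smul, add_zero, mul_one]
        congr 1
        linarith
      · set x : ℝ := Lx n + (1/2)^(n+1) * t with hxdef
        have hxL : Lx n ≤ x := by
          rw [hxdef]; nlinarith [mul_nonneg (le_of_lt hσpos) ht.1]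
        have hxR : x < Lx (n+1) := by
          rw [hxdef]; nlinarith [mul_lt_mul_of_pos_left ht1 hσpos]
        have hx0 : 0 ≤ x := le_trans (Lx_nonneg hn) hxL
        have hxhalf : x < 1/2 := lt_of_lt_of_le hxR (le_of_lt (Lx_lt_half (n+1)))
        refine ⟨x, ⟨hx0, le_of_lt hxhalf⟩, ?_⟩
        have hidx : nIdx x = n := nIdx_spec hn hxL hxR
        have hh : hFn x = (1/2)^(n+1) * alphaFn t := by
          rw [hFn_eq hx0 hxhalf, hidx, sigma_min]
          congr 1
          · rw [hxdef]; ring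
          · rw [hxdef, mul_sub, mul_one]; linarith
        unfold Phi
        rw [hh, hidx]
    · simp only [mem_singleton_iff] at hy
      exact ⟨1/2, ⟨by norm_num, le_refl _⟩, by rw [Phi_half, hy]⟩
  · rintro ⟨x, ⟨h0, h2⟩, rfl⟩
    rcases eq_or_lt_of_le h2 with heq | hlt
    · right
      rw [heq, Phi_half]; rfl
    · left
      obtain ⟨hn, hL, hR⟩ := nIdx_exists h0 hlt
      set n := nIdx x
      have hσpos : (0:ℝ) < (1/2)^(n+1) := by positivity
      set t : ℝ := (x - Lx n) / (1/2)^(n+1) with htdef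
      have hgap := Lx_gap n
      have ht0 : 0 ≤ t := div_nonneg (by linarith) (le_of_lt hσpos)
      have ht1 : t ≤ 1 := by
        rw [div_le_one hσpos]; linarith
      simp only [mem_iUnion, mem_setOf_eq]
      refine ⟨n, hn, t • e 0 + alphaFn t • e n, ⟨t, ⟨ht0, ht1⟩, rfl⟩, ?_⟩
      show ((1:ℝ)/2^(n+1)) • (t • e 0 + alphaFn t • e n) + xpt n = Phi x
      rw [tent_expand]
      have hxt : Lx n + (1/2)^(n+1) * t = x := by
        rw [htdef]; field_simp; ring
      have hht : (1/2)^(n+1) * alphaFn t = hFn x := by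
        rw [sigma_min, hFn_eq h0 hlt, show nIdx x = n from rfl]
        congr 1
        · linarith [hxt]
        · rw [mul_sub, mul_one]; linarith [hxt]
      rw [hxt, hht]
      rfl

lemma Phi_mem_Xset {x : ℝ} (hx : x ∈ Icc (0:ℝ) (1/2)) : Phi x ∈ Xset := by
  rw [Xset_eq]; exact mem_image_of_mem _ hx

lemma lipschitzOnWith_Phi : LipschitzOnWith 2 Phi (Icc (0:ℝ) (1/2)) := by
  rw [lipschitzOnWith_iff_dist_le_mul]
  intro x hx y hy
  have := dist_Phi_le hx hy
  rw [Real.dist_eq]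
  simpa using this

lemma compact_Xset : IsCompact Xset := by
  rw [Xset_eq]
  exact isCompact_Icc.image_of_continuousOn lipschitzOnWith_Phi.continuousOn

noncomputable def projI (x : ℝ) : ℝ := max 0 (min x (1/2))

lemma projI_mem (x : ℝ) : projI x ∈ Icc (0:ℝ) (1/2) :=
  ⟨le_max_left _ _, max_le (by norm_num) (min_le_right _ _)⟩

lemma projI_eq {x : ℝ} (hx : x ∈ Icc (0:ℝ) (1/2)) : projI x = x := by
  unfold projI
  rw [min_eq_left hx.2, max_eq_right hx.1]

lemma projI_lip (x y : ℝ) : |projI x - projI y| ≤ |x - y| := by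
  unfold projI
  refine le_trans (abs_max_sub_max_le_max _ _ _ _) (max_le (by simp [abs_nonneg]) ?_)
  refine le_trans (abs_min_sub_min_le_max _ _ _ _) (max_le le_rfl (by simp [abs_nonneg]))

noncomputable def qmap (x : ℝ) : ↥Xset := ⟨Phi (projI x), Phi_mem_Xset (projI_mem x)⟩

lemma dist_qmap_le (x y : ℝ) : dist (qmap x) (qmap y) ≤ 2 * |x - y| := by
  rw [Subtype.dist_eq]
  refine le_trans (dist_Phi_le (projI_mem x) (projI_mem y)) ?_
  have := projI_lip x y
  linarith

lemma lipschitz_qmap : LipschitzWith 2 qmap := by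
  apply LipschitzWith.of_dist_le_mul
  intro x y
  rw [Real.dist_eq]
  simpa using dist_qmap_le x y

lemma eVar_mono (a T : ℝ) (hT : 0 ≤ T) :
    eVariationOn (fun t : ℝ => a + t) (Icc 0 T) ≤ ENNReal.ofReal T := by
  have hm : MonotoneOn (fun t : ℝ => a + t) (Icc 0 T) := fun u _ v _ huv => by simpa
  have := hm.eVariationOn_le (left_mem_Icc.mpr hT) (right_mem_Icc.mpr hT)
  rw [inter_self] at this
  rw [show a + T - (a + 0) = T from by ring] at this
  exact this

lemma eVar_anti (a T : ℝ) (hT : 0 ≤ T) :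
    eVariationOn (fun t : ℝ => a - t) (Icc 0 T) ≤ ENNReal.ofReal T := by
  have hfun : (fun t : ℝ => a - t) = (fun u : ℝ => -u) ∘ (fun t : ℝ => t - a) := by
    funext t; simp only [Function.comp_apply]; ring
  rw [hfun]
  have hlip : LipschitzOnWith 1 (fun u : ℝ => -u) univ := by
    apply LipschitzWith.lipschitzOnWith
    have : (fun u : ℝ => -u) = fun u : ℝ => (0:ℝ) - u := by funext u; ring
    rw [this]
    simpa using (LipschitzWith.const (0:ℝ)).sub LipschitzWith.id
  refine le_trans (hlip.comp_eVariationOn_le (mapsTo_univ _ _)) ?_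
  have hm : MonotoneOn (fun t : ℝ => t - a) (Icc 0 T) := fun u _ v _ huv => by simpa
  have h2 := hm.eVariationOn_le (left_mem_Icc.mpr hT) (right_mem_Icc.mpr hT)
  rw [inter_self] at h2
  rw [show T - a - (0 - a) = T from by ring] at h2
  calc ((1:ℝ≥0):ℝ≥0∞) * eVariationOn (fun t : ℝ => t - a) (Icc 0 T)
      = eVariationOn (fun t : ℝ => t - a) (Icc 0 T) := by simp
    _ ≤ ENNReal.ofReal T := h2

lemma qmap_eq {x : ℝ} (hx : x ∈ Icc (0:ℝ) (1/2)) : (qmap x : ellOne) = Phi x := by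
  show Phi (projI x) = Phi x
  rw [projI_eq hx]

lemma intrinsic_le_aux {a b : ℝ} (ha : a ∈ Icc (0:ℝ) (1/2)) (hb : b ∈ Icc (0:ℝ) (1/2))
    {x y : ↥Xset} (hxa : (x : ellOne) = Phi a) (hyb : (y : ellOne) = Phi b) :
    intrinsicDist x y ≤ ENNReal.ofReal (2 * |b - a|) := by
  have hofReal : ∀ T : ℝ, ((2:ℝ≥0) : ℝ≥0∞) * ENNReal.ofReal T ≤ ENNReal.ofReal (2 * T) := by
    intro T
    rw [ENNReal.ofReal_mul (by norm_num)]
    apply mul_le_mul_left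
    rw [show ((2:ℝ≥0) : ℝ≥0∞) = ENNReal.ofReal 2 by simp [ENNReal.ofReal]]
  rcases le_total a b with hab | hab
  · set T := b - a with hTdef
    have hT : 0 ≤ T := by linarith
    set γ : ℝ → ↥Xset := qmap ∘ (fun t : ℝ => a + t) with hγ
    have hcont : ContinuousOn γ (Icc 0 T) :=
      (lipschitz_qmap.continuous.comp (by continuity)).continuousOn
    have h0 : γ 0 = x := by
      apply Subtype.ext
      simp only [hγ, Function.comp, add_zero]
      rw [qmap_eq ha, hxa]
    have hTy : γ T = y := by
      apply Subtype.ext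
      simp only [hγ, Function.comp, hTdef]
      rw [show a + (b - a) = b by ring, qmap_eq hb, hyb]
    have hvar : eVariationOn γ (Icc 0 T) ≤ ENNReal.ofReal (2 * |b - a|) := by
      have hlq : LipschitzOnWith 2 qmap univ := lipschitz_qmap.lipschitzOnWith
      refine le_trans (hlq.comp_eVariationOn_le (mapsTo_univ _ _)) ?_
      refine le_trans (mul_le_mul_right (eVar_mono a T hT) _) ?_
      rw [abs_of_nonneg (by linarith : (0:ℝ) ≤ b - a)]
      exact hofReal _
    refine le_trans ?_ hvar
    exact iInf_le_of_le T (iInf_le_of_le hT (iInf_le_of_le γ (iInf_le_of_le hcont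
      (iInf_le_of_le h0 (iInf_le_of_le hTy le_rfl)))))
  · set T := a - b with hTdef
    have hT : 0 ≤ T := by linarith
    set γ : ℝ → ↥Xset := qmap ∘ (fun t : ℝ => a - t) with hγ
    have hcont : ContinuousOn γ (Icc 0 T) :=
      (lipschitz_qmap.continuous.comp (by continuity)).continuousOn
    have h0 : γ 0 = x := by
      apply Subtype.ext
      simp only [hγ, Function.comp, sub_zero]
      rw [qmap_eq ha, hxa]
    have hTy : γ T = y := by
      apply Subtype.ext
      simp only [hγ, Function.comp, hTdef]
      rw [show a - (a - b) = b by ring, qmap_eq hb, hyb]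
    have hvar : eVariationOn γ (Icc 0 T) ≤ ENNReal.ofReal (2 * |b - a|) := by
      have hlq : LipschitzOnWith 2 qmap univ := lipschitz_qmap.lipschitzOnWith
      refine le_trans (hlq.comp_eVariationOn_le (mapsTo_univ _ _)) ?_
      refine le_trans (mul_le_mul_right (eVar_anti a T hT) _) ?_
      rw [abs_of_nonpos (by linarith : b - a ≤ 0)]
      refine le_trans (hofReal _) ?_
      apply ENNReal.ofReal_le_ofReal
      linarith
    refine le_trans ?_ hvar
    exact iInf_le_of_le T (iInf_le_of_le hT (iInf_le_of_le γ (iInf_le_of_le hcont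
      (iInf_le_of_le h0 (iInf_le_of_le hTy le_rfl)))))

lemma quasiconvex_Xset (x y : ↥Xset) :
    intrinsicDist x y ≤ ENNReal.ofReal (2 * dist x y) := by
  have hx : (x : ellOne) ∈ Phi '' Icc (0:ℝ) (1/2) := by rw [← Xset_eq]; exact x.2
  have hy : (y : ellOne) ∈ Phi '' Icc (0:ℝ) (1/2) := by rw [← Xset_eq]; exact y.2
  obtain ⟨a, ha, haeq⟩ := hx
  obtain ⟨b, hb, hbeq⟩ := hy
  refine le_trans (intrinsic_le_aux ha hb haeq.symm hbeq.symm) ?_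
  apply ENNReal.ofReal_le_ofReal
  have h1 : |b - a| ≤ dist (Phi b) (Phi a) := dist_Phi_ge b a
  rw [Subtype.dist_eq, ← haeq, ← hbeq, dist_comm]
  linarith
lemma pow_half_lt {a b : ℕ} (h : a < b) : ((1/2:ℝ))^b < (1/2)^a :=
  pow_lt_pow_right_of_lt_one₀ (by norm_num) (by norm_num) h

set_option maxHeartbeats 1000000 in
lemma local_isom_aux {n : ℕ} (hn : 1 ≤ n) {x : ℝ} (hxL : Lx n ≤ x) (hxR : x < Lx (n+1)) :
    ∃ ε > 0, ∀ x' ∈ Icc (0:ℝ) (1/2), dist (Phi x) (Phi x') < ε →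
      2 * |x - x'| ≤ dist (Phi x) (Phi x') := by
  have h2x : x < 1/2 := lt_trans hxR (Lx_lt_half _)
  have h0x : 0 ≤ x := le_trans (Lx_nonneg hn) hxL
  have hidx : nIdx x = n := nIdx_spec hn hxL hxR
  have hgap : Lx (n+1) - Lx n = (1/2)^(n+1) := Lx_gap n
  have hgap2 : Lx (n+2) - Lx (n+1) = (1/2)^(n+2) := Lx_gap (n+1)
  set Mid : ℝ := (Lx n + Lx (n+1))/2 with hMiddef
  have hhx : hFn x = min (x - Lx n) (Lx (n+1) - x) := by rw [hFn_eq h0x h2x, hidx]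
  set A : ℝ := if x = Mid then (1:ℝ) else 2*|x - Mid| with hA
  have hApos : 0 < A := by
    rw [hA]; split_ifs with h
    · norm_num
    · simp [abs_pos, sub_ne_zero.mpr h]
  have hp3 : (0:ℝ) < (1/2)^(n+3) := by positivity
  refine ⟨min A ((1/2)^(n+3)), lt_min hApos hp3, ?_⟩
  rintro x' ⟨h0', h2'⟩ hdist
  have hge := dist_Phi_ge x x'
  have hminB : min A ((1/2:ℝ)^(n+3)) ≤ (1/2)^(n+3) := min_le_right _ _
  have hp31 : ((1/2:ℝ))^(n+3) < (1/2)^(n+1) := pow_half_lt (by omega)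
  have hp32 : ((1/2:ℝ))^(n+3) < (1/2)^(n+2) := pow_half_lt (by omega)
  have hp3n : ((1/2:ℝ))^(n+3) < (1/2)^n := pow_half_lt (by omega)
  rcases eq_or_lt_of_le h2' with heq' | hlt'
  · -- x' = 1/2 : far away
    exfalso
    have h1 : (1/2:ℝ)^(n+1) < 1/2 - x := by
      have := Lx_half_gap (n+1); linarith
    have h2 : |x - x'| = 1/2 - x := by
      rw [← heq', abs_of_nonpos (by linarith)]; ring
    linarith
  -- now x' < 1/2
  obtain ⟨hm1, hmL, hmR⟩ := nIdx_exists h0' hlt'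
  have hhx' : hFn x' = min (x' - Lx (nIdx x')) (Lx (nIdx x' + 1) - x') := hFn_eq h0' hlt'
  rcases eq_or_ne (nIdx x') n with hmn | hmn
  · -- same tent
    have hd : dist (Phi x) (Phi x') = |x - x'| + |hFn x - hFn x'| :=
      dist_Phi_same (by rw [hidx, hmn])
    rw [hmn] at hhx' hmL hmR
    rcases le_or_gt x Mid with hxs | hxs
    · rcases le_or_gt x' Mid with hxs' | hxs'
      · -- both on upslope
        have e1 : hFn x = x - Lx n := by rw [hhx, min_eq_left (by linarith)]
        have e2 : hFn x' = x' - Lx n := by rw [hhx', min_eq_left (by linarith)]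
        rw [hd, e1, e2, show x - Lx n - (x' - Lx n) = x - x' from by ring]
        linarith [abs_nonneg (x - x')]
      · -- x ≤ Mid < x'
        have e1 : hFn x = x - Lx n := by rw [hhx, min_eq_left (by linarith)]
        have e2 : hFn x' = Lx (n+1) - x' := by rw [hhx', min_eq_right (by linarith)]
        rcases eq_or_lt_of_le hxs with hxe | hxlt
        · -- x = Mid : exact
          have hxx' : |x - x'| = x' - x := by rw [abs_of_nonpos (by linarith)]; ring
          have h2x2 : 2*x = Lx n + Lx (n+1) := by rw [hxe, hMiddef]; ring
          have habs : |hFn x - hFn x'| = x' - x := by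
            rw [e1, e2]
            rw [show x - Lx n - (Lx (n+1) - x') = x' - x from by linarith]
            rw [abs_of_nonneg (by linarith)]
          rw [hd, habs, hxx']
          linarith
        · -- x < Mid : contradiction, d ≥ 2(Mid - x) ≥ ε
          exfalso
          have hxne : x ≠ Mid := ne_of_lt hxlt
          have hAe : A = 2*|x - Mid| := by rw [hA, if_neg hxne]
          have hAe2 : A = 2*(Mid - x) := by
            rw [hAe, abs_of_nonpos (by linarith)]; ring
          have hdge : 2*(Mid - x) ≤ dist (Phi x) (Phi x') := by
            rw [hd, e1, e2]
            have hxx' : |x - x'| = x' - x := by rw [abs_of_nonpos (by linarith)]; ring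
            rw [hxx']
            rcases le_total (x - Lx n) (Lx (n+1) - x') with hc | hc
            · rw [abs_of_nonpos (by linarith)]
              linarith
            · rw [abs_of_nonneg (by linarith)]
              linarith
          have : min A ((1/2:ℝ)^(n+3)) ≤ A := min_le_left _ _
          linarith
    · rcases le_or_gt Mid x' with hxs' | hxs'
      · -- both on downslope
        have e1 : hFn x = Lx (n+1) - x := by rw [hhx, min_eq_right (by linarith)]
        have e2 : hFn x' = Lx (n+1) - x' := by rw [hhx', min_eq_right (by linarith)]
        rw [hd, e1, e2, show Lx (n+1) - x - (Lx (n+1) - x') = x' - x from by ring,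
          abs_sub_comm x' x]
        linarith [abs_nonneg (x - x')]
      · -- x' < Mid < x : contradiction
        exfalso
        have e1 : hFn x = Lx (n+1) - x := by rw [hhx, min_eq_right (by linarith)]
        have e2 : hFn x' = x' - Lx n := by rw [hhx', min_eq_left (by linarith)]
        have hxne : x ≠ Mid := ne_of_gt hxs
        have hAe2 : A = 2*(x - Mid) := by
          rw [hA, if_neg hxne, abs_of_nonneg (by linarith)]
        have hdge : 2*(x - Mid) ≤ dist (Phi x) (Phi x') := by
          rw [hd, e1, e2]
          have hxx' : |x - x'| = x - x' := by rw [abs_of_nonneg (by linarith)]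
          rw [hxx']
          rcases le_total (Lx (n+1) - x) (x' - Lx n) with hc | hc
          · rw [abs_of_nonpos (by linarith)]
            linarith
          · rw [abs_of_nonneg (by linarith)]
            linarith
        have : min A ((1/2:ℝ)^(n+3)) ≤ A := min_le_left _ _
        linarith
  · -- different tents
    have hd : dist (Phi x) (Phi x') = |x - x'| + hFn x + hFn x' :=
      dist_Phi_diff (by rw [hidx]; exact fun hc => hmn (by omega))
    rcases lt_or_gt_of_ne hmn with hlt | hgt
    · -- m < n, so x' < x
      have hord : Lx (nIdx x' + 1) ≤ Lx n := Lx_mono.monotone (by omega)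
      have hxx' : x' < x := by linarith
      have habs : |x - x'| = x - x' := by rw [abs_of_nonneg (by linarith)]
      rcases le_or_gt x Mid with hxs | hxs
      · -- x on upslope
        rcases eq_or_ne (nIdx x') (n - 1) with hm | hm
        · -- adjacent tent
          have hn1 : nIdx x' + 1 = n := by omega
          have hgap' : Lx n - Lx (nIdx x') = (1/2)^n := by
            have := Lx_gap (nIdx x')
            rw [hn1] at this
            exact this
          rcases le_or_gt ((Lx (nIdx x') + Lx n)/2) x' with hside' | hside'
          · -- x' on downslope of adjacent tent : exact
            have e1 : hFn x = x - Lx n := by rw [hhx, min_eq_left (by linarith)]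
            have e2 : hFn x' = Lx n - x' := by
              rw [hhx', min_eq_right (by rw [hn1]; linarith)]
              rw [hn1]
            rw [hd, e1, e2, habs]
            linarith
          · -- x' before the midpoint of adjacent tent : far
            exfalso
            have : (1/2:ℝ)^(n+1) < x - x' := by
              have h1 : x' < (Lx (nIdx x') + Lx n)/2 := hside'
              have h2 : Lx n ≤ x := hxL
              have := hgap'
              have hhalf : (1/2:ℝ)^n = 2 * (1/2)^(n+1) := by rw [pow_succ]; ring
              linarith
            linarith
        · -- tent at least two away : far
          exfalso
          have hord2 : Lx (nIdx x' + 1) ≤ Lx (n-1) := Lx_mono.monotone (by omega)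
          have hgapn : Lx n - Lx (n-1) = (1/2)^n := by
            have := Lx_gap (n-1)
            rw [show n - 1 + 1 = n from by omega] at this
            exact this
          have : (1/2:ℝ)^n < x - x' := by linarith
          linarith
      · -- x on downslope, any earlier tent : far
        exfalso
        have hhalf : (1/2:ℝ)^n = 2 * (1/2)^(n+1) := by rw [pow_succ]; ring
        have : (1/2:ℝ)^(n+2) < x - x' := by
          have h1 : x' < Lx n := by linarith
          have h2 : (1/2:ℝ)^(n+1) = 2 * (1/2)^(n+2) := by rw [pow_succ]; ring
          linarith
        linarith
    · -- n < m, so x < x'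
      have hord : Lx (n + 1) ≤ Lx (nIdx x') := Lx_mono.monotone (by omega)
      have hxx' : x < x' := by linarith
      have habs : |x - x'| = x' - x := by rw [abs_of_nonpos (by linarith)]; ring
      rcases le_or_gt Mid x with hxs | hxs
      · rcases eq_or_ne (nIdx x') (n + 1) with hm | hm
        · rcases le_or_gt x' ((Lx (n+1) + Lx (n+2))/2) with hside' | hside'
          · -- exact
            have e1 : hFn x = Lx (n+1) - x := by rw [hhx, min_eq_right (by linarith)]
            have e2 : hFn x' = x' - Lx (n+1) := by
              rw [hhx', hm]
              rw [min_eq_left (by rw [show n+1+1 = n+2 from rfl]; linarith)]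
            rw [hd, e1, e2, habs]
            linarith
          · -- beyond midpoint of next tent : far
            exfalso
            have h2 : (1/2:ℝ)^(n+2) = 2 * (1/2)^(n+3) := by rw [pow_succ]; ring
            have : (1/2:ℝ)^(n+3) < x' - x := by
              have h1 : x ≤ Lx (n+1) := le_of_lt hxR
              linarith
            linarith
        · -- at least two tents later : far
          exfalso
          have hord2 : Lx (n + 2) ≤ Lx (nIdx x') := Lx_mono.monotone (by omega)
          have : (1/2:ℝ)^(n+2) < x' - x := by linarith
          linarith
      · -- x on upslope, later tent : far
        exfalso
        have h2 : (1/2:ℝ)^(n+1) = 2 * (1/2)^(n+2) := by rw [pow_succ]; ring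
        have : (1/2:ℝ)^(n+2) < x' - x := by
          have h1 : Lx (n+1) ≤ x' := by linarith
          linarith
        linarith

lemma local_isom {x : ℝ} (h0 : 0 ≤ x) (h2 : x < 1/2) :
    ∃ ε > 0, ∀ x' ∈ Icc (0:ℝ) (1/2), dist (Phi x) (Phi x') < ε →
      2 * |x - x'| ≤ dist (Phi x) (Phi x') := by
  obtain ⟨hn, hL, hR⟩ := nIdx_exists h0 h2
  exact local_isom_aux hn hL hR
section SlopeLemmas

variable {Y : Type*} [MetricSpace Y] {u : Y → ℝ} {S : Set Y} {z : Y}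

lemma slope_freq_ge {ℓz c' : ℝ} (hslope : locSlopeOn u S z = ENNReal.ofReal ℓz)
    (hc' : 0 ≤ c') (hlt : c' < ℓz) :
    ∃ᶠ y in 𝓝[S \ {z}] z, c' < max (u z - u y) 0 / dist z y := by
  by_contra hcon
  rw [Filter.not_frequently] at hcon
  have hev : ∀ᶠ y in 𝓝[S \ {z}] z,
      ENNReal.ofReal (max (u z - u y) 0 / dist z y) ≤ ENNReal.ofReal c' :=
    hcon.mono (fun y hy => ENNReal.ofReal_le_ofReal (not_lt.mp hy))
  have hle := Filter.limsup_le_of_le (by isBoundedDefault) hev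
  unfold locSlopeOn at hslope
  rw [hslope] at hle
  have := (ENNReal.ofReal_le_ofReal_iff hc').mp hle
  linarith

lemma slope_le_of_ev {c' : ℝ}
    (hev : ∀ᶠ y in 𝓝[S \ {z}] z, max (u z - u y) 0 / dist z y ≤ c') :
    locSlopeOn u S z ≤ ENNReal.ofReal c' := by
  unfold locSlopeOn
  exact Filter.limsup_le_of_le (by isBoundedDefault)
    (hev.mono fun y hy => ENNReal.ofReal_le_ofReal hy)

lemma slope_ge_of_freq {c' : ℝ}
    (hfreq : ∃ᶠ y in 𝓝[S \ {z}] z, c' ≤ max (u z - u y) 0 / dist z y) :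
    ENNReal.ofReal c' ≤ locSlopeOn u S z := by
  unfold locSlopeOn
  exact Filter.le_limsup_of_frequently_le
    (hfreq.mono fun y hy => ENNReal.ofReal_le_ofReal hy) (by isBoundedDefault)

end SlopeLemmas
lemma down_lemma {Ω : Set ↥Xset} {u ℓ : ↥Xset → ℝ}
    (hsl : ∀ p ∈ Ω, locSlopeOn u (closure Ω) p = ENNReal.ofReal (ℓ p))
    {x : ℝ} (hx : x ∈ Icc (0:ℝ) (1/2)) (hx2 : x < 1/2) (hmem : qmap x ∈ Ω)
    {c' : ℝ} (hc0 : 0 ≤ c') (hcl : c' < ℓ (qmap x)) {η : ℝ} (hη : 0 < η) :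
    ∃ x' ∈ Icc (0:ℝ) (1/2), x' ≠ x ∧ |x' - x| < η ∧
      2*c'*|x - x'| ≤ u (qmap x) - u (qmap x') := by
  obtain ⟨ε, hε, hisom⟩ := local_isom hx.1 hx2
  have hfreq := slope_freq_ge (hsl _ hmem) hc0 hcl
  have hev1 : ∀ᶠ y in 𝓝[closure Ω \ {qmap x}] (qmap x), dist (qmap x) y < min ε η := by
    have hb : ∀ᶠ y in 𝓝 (qmap x), dist (qmap x) y < min ε η := by
      filter_upwards [Metric.ball_mem_nhds (qmap x) (lt_min hε hη)] with y hy
      rw [Metric.mem_ball, dist_comm] at hy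
      exact hy
    exact hb.filter_mono nhdsWithin_le_nhds
  have hev2 : ∀ᶠ y in 𝓝[closure Ω \ {qmap x}] (qmap x), y ∈ closure Ω \ {qmap x} :=
    self_mem_nhdsWithin
  obtain ⟨y, hy1, hy2, hy3⟩ := (hfreq.and_eventually (hev1.and hev2)).exists
  obtain ⟨x', hx'mem, hPhix'⟩ : ∃ x' ∈ Icc (0:ℝ) (1/2), Phi x' = (y : ellOne) := by
    have hyX : (y : ellOne) ∈ Phi '' Icc (0:ℝ) (1/2) := by
      rw [← Xset_eq]; exact y.2
    obtain ⟨x', h1, h2⟩ := hyX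
    exact ⟨x', h1, h2⟩
  have hyq : y = qmap x' := Subtype.ext (by rw [qmap_eq hx'mem, hPhix'])
  have hdeq : dist (qmap x) y = dist (Phi x) (Phi x') := by
    rw [Subtype.dist_eq, qmap_eq hx, hPhix']
  have hyne : y ≠ qmap x := hy3.2
  have hdpos : 0 < dist (qmap x) y := dist_pos.mpr (Ne.symm hyne)
  have hxne : x' ≠ x := by
    rintro rfl
    exact hyne hyq
  have hisom' : 2 * |x - x'| ≤ dist (Phi x) (Phi x') :=
    hisom x' hx'mem (by rw [← hdeq]; exact lt_of_lt_of_le hy2 (min_le_left _ _))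
  have hnum : c' * dist (qmap x) y < max (u (qmap x) - u y) 0 :=
    (lt_div_iff₀ hdpos).mp hy1
  have hmaxpos : 0 < max (u (qmap x) - u y) 0 :=
    lt_of_le_of_lt (mul_nonneg hc0 dist_nonneg) hnum
  have hmax : max (u (qmap x) - u y) 0 = u (qmap x) - u y := by
    by_contra hcon
    have hle : u (qmap x) - u y ≤ 0 := by
      rcases le_total (u (qmap x) - u y) 0 with h | h
      · exact h
      · exact absurd (max_eq_left h) hcon
    rw [max_eq_right hle] at hmaxpos
    exact lt_irrefl 0 hmaxpos
  refine ⟨x', hx'mem, hxne, ?_, ?_⟩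
  · have h1 : |x - x'| ≤ dist (Phi x) (Phi x') := dist_Phi_ge x x'
    rw [abs_sub_comm]
    calc |x - x'| ≤ dist (Phi x) (Phi x') := h1
      _ = dist (qmap x) y := hdeq.symm
      _ < min ε η := hy2
      _ ≤ η := min_le_right _ _
  · have h1 : c' * (2 * |x - x'|) ≤ c' * dist (qmap x) y := by
      apply mul_le_mul_of_nonneg_left _ hc0
      rw [hdeq]
      exact hisom'
    rw [← hyq]
    calc 2*c'*|x - x'| = c' * (2 * |x - x'|) := by ring
      _ ≤ c' * dist (qmap x) y := h1
      _ ≤ max (u (qmap x) - u y) 0 := le_of_lt hnum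
      _ = u (qmap x) - u y := hmax
set_option maxHeartbeats 1000000 in
lemma part3 (Ω : Set ↥Xset) (hΩ : IsOpen Ω)
    (hz : ∃ z : ↥Xset, (z : ellOne) = xInf ∧ z ∈ Ω)
    (ℓ g : ↥Xset → ℝ)
    (hpos : ∃ c > 0, ∀ x ∈ Ω, c ≤ ℓ x) (hℓc : ContinuousOn ℓ Ω) :
    ¬ ∃ u : ↥Xset → ℝ, IsEikonalSol Ω ℓ g u := by
  rintro ⟨u, hucont, huslope, -⟩
  obtain ⟨z, hzval, hzΩ⟩ := hz
  obtain ⟨c, hc, hcle⟩ := hpos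
  have hhalfmem : (1/2:ℝ) ∈ Icc (0:ℝ) (1/2) := by norm_num
  have hzq : z = qmap (1/2) := Subtype.ext (by rw [hzval, qmap_eq hhalfmem, Phi_half])
  set Linf : ℝ := ℓ z with hLinf
  have hLinfpos : 0 < Linf := lt_of_lt_of_le hc (hcle z hzΩ)
  set w : ℝ → ℝ := fun t => u (qmap t) with hw
  obtain ⟨ρ₁, hρ₁, hball⟩ := Metric.isOpen_iff.mp hΩ z hzΩ
  have hℓat : ContinuousAt ℓ z := hℓc.continuousAt (hΩ.mem_nhds hzΩ)
  obtain ⟨ρ₂, hρ₂, hρ₂prop⟩ := Metric.continuousAt_iff.mp hℓat (Linf/8) (by linarith)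
  set δ₀ : ℝ := min (min ρ₁ ρ₂ / 4) (1/8) with hδ₀
  have hmm12 : 0 < min ρ₁ ρ₂ := lt_min hρ₁ hρ₂
  have hδ₀pos : 0 < δ₀ := lt_min (by linarith) (by norm_num)
  have hδ₀le : δ₀ ≤ 1/8 := min_le_right _ _
  set a₁ : ℝ := 1/2 - δ₀ with ha₁
  have ha₁pos : 0 < a₁ := by rw [ha₁]; linarith
  have ha₁lt : a₁ < 1/2 := by rw [ha₁]; linarith
  -- tail estimates
  have htail : ∀ t, a₁ ≤ t → t ≤ 1/2 → qmap t ∈ Ω ∧ |ℓ (qmap t) - Linf| < Linf/8 := by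
    intro t h1 h2
    have htmem : t ∈ Icc (0:ℝ) (1/2) := ⟨by linarith, h2⟩
    have hdist : dist (qmap t) z < min ρ₁ ρ₂ := by
      rw [hzq, Subtype.dist_eq, qmap_eq htmem, qmap_eq hhalfmem]
      have hdle := dist_Phi_le htmem hhalfmem
      have habs : |t - 1/2| = 1/2 - t := by rw [abs_of_nonpos (by linarith)]; ring
      have hd4 : δ₀ ≤ min ρ₁ ρ₂ / 4 := min_le_left _ _
      calc dist (Phi t) (Phi (1/2)) ≤ 2*|t - 1/2| := hdle
        _ = 2*(1/2 - t) := by rw [habs]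
        _ ≤ 2*δ₀ := by rw [ha₁] at h1; linarith
        _ < min ρ₁ ρ₂ := by linarith
    constructor
    · exact hball (Metric.mem_ball.mpr (lt_of_lt_of_le hdist (min_le_left _ _)))
    · have := hρ₂prop (lt_of_lt_of_le hdist (min_le_right _ _))
      rwa [Real.dist_eq] at this
  -- continuity of w
  have hwca : ∀ t, a₁ ≤ t → t ≤ 1/2 → ContinuousAt w t := by
    intro t h1 h2
    have hqΩ : qmap t ∈ Ω := (htail t h1 h2).1
    have huat : ContinuousAt u (qmap t) :=
      hucont.continuousAt (Filter.mem_of_superset (hΩ.mem_nhds hqΩ) subset_closure)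
    exact huat.comp lipschitz_qmap.continuous.continuousAt
  -- descent property
  have hdown : ∀ t, a₁ < t → t < 1/2 → ∀ η > 0, ∃ x' ∈ Icc (0:ℝ) (1/2), x' ≠ t ∧
      |x' - t| < η ∧ 2*(3/4*Linf)*|t - x'| ≤ w t - w x' := by
    intro t h1 h2 η hη
    have hq := htail t (le_of_lt h1) (le_of_lt h2)
    have hc0 : (0:ℝ) ≤ 3/4*Linf := by linarith
    have hcl : 3/4*Linf < ℓ (qmap t) := by
      have habs := abs_lt.mp hq.2
      linarith [habs.1]
    exact down_lemma huslope ⟨by linarith, le_of_lt h2⟩ h2 hq.1 hc0 hcl hη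
  -- no local minimum
  have hnlm : ∀ t, a₁ < t → t < 1/2 → ∀ η > 0, ∃ x', |x' - t| < η ∧
      x' ∈ Icc (0:ℝ) (1/2) ∧ w x' < w t := by
    intro t h1 h2 η hη
    obtain ⟨x', hm, hne', hlt, hdrop⟩ := hdown t h1 h2 η hη
    refine ⟨x', hlt, hm, ?_⟩
    have hgt : 0 < |t - x'| := by
      rw [abs_sub_comm]; exact abs_pos.mpr (sub_ne_zero.mpr hne')
    nlinarith
  -- maximum of w on [a₁, 1/2]
  have hIccne : (Icc a₁ (1/2)).Nonempty := ⟨a₁, le_refl _, le_of_lt ha₁lt⟩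
  have hwcont : ContinuousOn w (Icc a₁ (1/2)) :=
    fun t ht => (hwca t ht.1 ht.2).continuousWithinAt
  obtain ⟨ξ, hξmem, hξmax⟩ := isCompact_Icc.exists_isMaxOn hIccne hwcont
  have hSclosed : IsClosed (Icc a₁ (1/2) ∩ w ⁻¹' {w ξ}) :=
    hwcont.preimage_isClosed_of_isClosed isClosed_Icc isClosed_singleton
  have hSne : (Icc a₁ (1/2) ∩ w ⁻¹' {w ξ}).Nonempty := ⟨ξ, hξmem, rfl⟩
  have hSbdd : BddAbove (Icc a₁ (1/2) ∩ w ⁻¹' {w ξ}) :=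
    bddAbove_Icc.mono inter_subset_left
  set ρm : ℝ := sSup (Icc a₁ (1/2) ∩ w ⁻¹' {w ξ}) with hρm
  have hρmS : ρm ∈ Icc a₁ (1/2) ∩ w ⁻¹' {w ξ} := hSclosed.csSup_mem hSne hSbdd
  have hρmIcc : ρm ∈ Icc a₁ (1/2) := hρmS.1
  have hρw : w ρm = w ξ := hρmS.2
  have hρmax : ∀ t ∈ Icc a₁ (1/2), w t ≤ w ρm := by
    intro t ht; rw [hρw]; exact hξmax ht
  -- monotone after the max point
  have hafter : ∀ p q, ρm ≤ p → p ≤ q → q ≤ 1/2 → w q ≤ w p := by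
    intro p q hp hpq hq
    by_contra hcon
    push_neg at hcon
    have hsub : Icc ρm q ⊆ Icc a₁ (1/2) := Icc_subset_Icc hρmIcc.1 hq
    have hρq : ρm ≤ q := le_trans hp hpq
    obtain ⟨m, hmmem, hmmin⟩ := isCompact_Icc.exists_isMinOn
      (⟨ρm, le_refl _, hρq⟩ : (Icc ρm q).Nonempty) (hwcont.mono hsub)
    rw [isMinOn_iff] at hmmin
    have hmlep : w m ≤ w p := hmmin p ⟨hp, hpq⟩
    have hmltq : w m < w q := lt_of_le_of_lt hmlep hcon
    have hmltρ : w m < w ρm :=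
      lt_of_lt_of_le hmltq (hρmax q (hsub ⟨hρq, le_refl _⟩))
    have hmlt2 : m < q := by
      rcases eq_or_lt_of_le hmmem.2 with h | h
      · rw [h] at hmltq; exact absurd hmltq (lt_irrefl _)
      · exact h
    have hmgt : ρm < m := by
      rcases eq_or_lt_of_le hmmem.1 with h | h
      · rw [← h] at hmltρ; exact absurd hmltρ (lt_irrefl _)
      · exact h
    have hma : a₁ < m := lt_of_le_of_lt hρmIcc.1 hmgt
    have hm12 : m < 1/2 := lt_of_lt_of_le hmlt2 hq
    obtain ⟨x', hx'lt, hx'mem, hx'w⟩ :=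
      hnlm m hma hm12 (min (m - ρm) (q - m)) (lt_min (by linarith) (by linarith))
    have hx'in : x' ∈ Icc ρm q := by
      have h1 := abs_lt.mp hx'lt
      have h2 := min_le_left (m - ρm) (q - m)
      have h3 := min_le_right (m - ρm) (q - m)
      constructor
      · linarith [h1.1]
      · linarith [h1.2]
    exact absurd (hmmin x' hx'in) (not_le.mpr hx'w)
  -- monotone before the max point
  have hbefore : ∀ p q, a₁ ≤ p → p ≤ q → q ≤ ρm → w p ≤ w q := by
    intro p q hp hpq hq
    by_contra hcon
    push_neg at hcon
    have hsub : Icc p ρm ⊆ Icc a₁ (1/2) := Icc_subset_Icc hp hρmIcc.2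
    have hpρ : p ≤ ρm := le_trans hpq hq
    obtain ⟨m, hmmem, hmmin⟩ := isCompact_Icc.exists_isMinOn
      (⟨p, le_refl _, hpρ⟩ : (Icc p ρm).Nonempty) (hwcont.mono hsub)
    rw [isMinOn_iff] at hmmin
    have hmleq : w m ≤ w q := hmmin q ⟨hpq, hq⟩
    have hmltp : w m < w p := lt_of_le_of_lt hmleq hcon
    have hmltρ : w m < w ρm :=
      lt_of_lt_of_le hmltp (hρmax p (hsub ⟨le_refl _, hpρ⟩))
    have hmgt : p < m := by
      rcases eq_or_lt_of_le hmmem.1 with h | h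
      · rw [← h] at hmltp; exact absurd hmltp (lt_irrefl _)
      · exact h
    have hmlt2 : m < ρm := by
      rcases eq_or_lt_of_le hmmem.2 with h | h
      · rw [h] at hmltρ; exact absurd hmltρ (lt_irrefl _)
      · exact h
    have hma : a₁ < m := lt_of_le_of_lt hp hmgt
    have hm12 : m < 1/2 := lt_of_lt_of_le hmlt2 hρmIcc.2
    obtain ⟨x', hx'lt, hx'mem, hx'w⟩ :=
      hnlm m hma hm12 (min (m - p) (ρm - m)) (lt_min (by linarith) (by linarith))
    have hx'in : x' ∈ Icc p ρm := by
      have h1 := abs_lt.mp hx'lt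
      have h2 := min_le_left (m - p) (ρm - m)
      have h3 := min_le_right (m - p) (ρm - m)
      constructor
      · linarith [h1.1]
      · linarith [h1.2]
    exact absurd (hmmin x' hx'in) (not_le.mpr hx'w)
  rcases eq_or_lt_of_le hρmIcc.2 with hρeq | hρlt
  · -- Case ρm = 1/2 : w nondecreasing, growth estimate
    have hnd : ∀ p q, a₁ ≤ p → p ≤ q → q ≤ 1/2 → w p ≤ w q :=
      fun p q h1 h2 h3 => hbefore p q h1 h2 (by rw [hρeq]; exact h3)
    have hgrow : ∀ x' t, a₁ < x' → x' ≤ t → t < 1/2 → 5/4*Linf*(t - x') ≤ w t - w x' := by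
      intro x' t hx'a hx't ht
      set φ : ℝ → ℝ := fun s => w s - 5/4*Linf*s with hφ
      have hsub : Icc x' t ⊆ Icc a₁ (1/2) := Icc_subset_Icc (le_of_lt hx'a) (le_of_lt ht)
      have hφcont : ContinuousOn φ (Icc x' t) :=
        (hwcont.mono hsub).sub ((continuous_const.mul continuous_id).continuousOn)
      obtain ⟨m0, hm0mem, hm0min⟩ := isCompact_Icc.exists_isMinOn
        (⟨x', le_refl _, hx't⟩ : (Icc x' t).Nonempty) hφcont
      rw [isMinOn_iff] at hm0min
      have hTclosed : IsClosed (Icc x' t ∩ φ ⁻¹' {φ m0}) :=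
        hφcont.preimage_isClosed_of_isClosed isClosed_Icc isClosed_singleton
      have hTne : (Icc x' t ∩ φ ⁻¹' {φ m0}).Nonempty := ⟨m0, hm0mem, rfl⟩
      have hTbdd : BddBelow (Icc x' t ∩ φ ⁻¹' {φ m0}) :=
        bddBelow_Icc.mono inter_subset_left
      set ξ₂ : ℝ := sInf (Icc x' t ∩ φ ⁻¹' {φ m0}) with hξ₂
      have hξ₂T : ξ₂ ∈ Icc x' t ∩ φ ⁻¹' {φ m0} := hTclosed.csInf_mem hTne hTbdd
      have hξ₂φ : φ ξ₂ = φ m0 := hξ₂T.2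
      rcases eq_or_lt_of_le hξ₂T.1.1 with heq | hlt2
      · -- minimum at the left end
        have h1 : φ x' ≤ φ t := by
          rw [heq, hξ₂φ]
          exact hm0min t ⟨hx't, le_refl _⟩
        simp only [hφ] at h1
        linarith
      · exfalso
        have hξa : a₁ < ξ₂ := lt_trans hx'a hlt2
        have hξhalf : ξ₂ < 1/2 := lt_of_le_of_lt hξ₂T.1.2 ht
        obtain ⟨x'', hx''mem, hx''ne, hx''lt, hx''drop⟩ :=
          hdown ξ₂ hξa hξhalf (ξ₂ - x') (by linarith)
        have hx''w : w x'' < w ξ₂ := by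
          have hgt : 0 < |ξ₂ - x''| :=
            abs_pos.mpr (sub_ne_zero.mpr (fun hcon => hx''ne hcon.symm))
          nlinarith
        have hx''lt2 : x'' < ξ₂ := by
          by_contra hge
          push_neg at hge
          exact absurd (hnd ξ₂ x'' (le_of_lt hξa) hge hx''mem.2) (not_le.mpr hx''w)
        have hx''gt : x' < x'' := by
          have h1 := abs_lt.mp hx''lt
          linarith [h1.1]
        have habs2 : |ξ₂ - x''| = ξ₂ - x'' := abs_of_nonneg (by linarith)
        rw [habs2] at hx''drop
        have hφx'' : φ x'' < φ ξ₂ := by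
          simp only [hφ]
          nlinarith [mul_pos hLinfpos (sub_pos.mpr hx''lt2)]
        have hmin' : φ m0 ≤ φ x'' :=
          hm0min x'' ⟨le_of_lt hx''gt, le_trans (le_of_lt hx''lt2) hξ₂T.1.2⟩
        rw [hξ₂φ] at hφx''
        linarith
    -- pass to the limit t → 1/2
    have hgrow2 : ∀ x', a₁ < x' → x' < 1/2 → 5/4*Linf*(1/2 - x') ≤ w (1/2) - w x' := by
      intro x' h1 h2
      have hlim : Tendsto (fun t => w t - w x') (𝓝[<] (1/2:ℝ)) (𝓝 (w (1/2) - w x')) :=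
        (((hwca (1/2) (le_of_lt ha₁lt) le_rfl).tendsto.sub
          tendsto_const_nhds)).mono_left nhdsWithin_le_nhds
      have hlim2 : Tendsto (fun t : ℝ => 5/4*Linf*(t - x')) (𝓝[<] (1/2:ℝ))
          (𝓝 (5/4*Linf*(1/2 - x'))) :=
        ((continuous_const.mul (continuous_id.sub continuous_const)).tendsto _).mono_left
          nhdsWithin_le_nhds
      refine le_of_tendsto_of_tendsto hlim2 hlim ?_
      filter_upwards [Ioo_mem_nhdsLT_of_mem (⟨h2, le_refl _⟩ : (1/2:ℝ) ∈ Ioc x' (1/2))]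
        with t ht
      exact hgrow x' t h1 (le_of_lt ht.1) ht.2
    -- junction points provide a contradiction
    obtain ⟨N, hN⟩ : ∃ N : ℕ, (1/2:ℝ)^N < δ₀ := exists_pow_lt_of_lt_one hδ₀pos (by norm_num)
    have hLxN : ∀ n, max N 1 ≤ n → a₁ < Lx n ∧ Lx n < 1/2 := by
      intro n hn
      have h1 : ((1/2:ℝ))^n ≤ (1/2)^N :=
        pow_le_pow_of_le_one (by norm_num) (by norm_num) (le_trans (le_max_left _ _) hn)
      have h2 := Lx_half_gap n
      constructor
      · rw [ha₁]; linarith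
      · exact Lx_lt_half n
    have hdistj : ∀ n, 1 ≤ n → dist z (qmap (Lx n)) = (1/2)^n := by
      intro n hn
      have hLmem : Lx n ∈ Icc (0:ℝ) (1/2) := ⟨Lx_nonneg hn, le_of_lt (Lx_lt_half n)⟩
      have hgap := Lx_half_gap n
      rw [hzq, Subtype.dist_eq, qmap_eq hhalfmem, qmap_eq hLmem]
      have habs : |(1/2:ℝ) - Lx n| = (1/2)^n := by
        rw [abs_of_nonneg (by linarith [Lx_lt_half n])]; linarith
      rcases eq_or_ne (nIdx (1/2:ℝ)) (nIdx (Lx n)) with hh | hh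
      · rw [dist_Phi_same hh, hFn_half, hFn_Lx hn, habs]; simp
      · rw [dist_Phi_diff hh, hFn_half, hFn_Lx hn, habs]; ring
    have hquotj : ∀ n, max N 1 + 1 ≤ n →
        5/4*Linf ≤ max (u z - u (qmap (Lx n))) 0 / dist z (qmap (Lx n)) := by
      intro n hn
      have hn1 : 1 ≤ n := by omega
      have hLx := hLxN n (by omega)
      have hd := hdistj n hn1
      have hdpos : (0:ℝ) < (1/2)^n := by positivity
      have hgap := Lx_half_gap n
      have hgrown := hgrow2 (Lx n) hLx.1 hLx.2
      have huz : u z = w (1/2) := by rw [hzq]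
      have hnum : 5/4*Linf*(1/2)^n ≤ u z - u (qmap (Lx n)) := by
        rw [huz]
        calc 5/4*Linf*(1/2)^n = 5/4*Linf*(1/2 - Lx n) := by rw [← hgap]
          _ ≤ w (1/2) - w (Lx n) := hgrown
          _ = w (1/2) - u (qmap (Lx n)) := rfl
      rw [hd, le_div_iff₀ hdpos]
      calc 5/4*Linf*(1/2)^n ≤ u z - u (qmap (Lx n)) := hnum
        _ ≤ max (u z - u (qmap (Lx n))) 0 := le_max_left _ _
    have htendz : Tendsto (fun n : ℕ => qmap (Lx n)) atTop (𝓝[closure Ω \ {z}] z) := by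
      rw [tendsto_nhdsWithin_iff]
      constructor
      · rw [tendsto_iff_dist_tendsto_zero]
        have hsq : Tendsto (fun n : ℕ => ((1/2:ℝ))^n) atTop (𝓝 0) :=
          tendsto_pow_atTop_nhds_zero_of_lt_one (by norm_num) (by norm_num)
        apply hsq.congr'
        filter_upwards [Filter.eventually_ge_atTop 1] with n hn
        rw [dist_comm]
        exact (hdistj n hn).symm
      · filter_upwards [Filter.eventually_ge_atTop (max N 1)] with n hn
        have hLx := hLxN n hn
        have hn1 : 1 ≤ n := le_trans (le_max_right _ _) hn
        refine ⟨subset_closure (htail (Lx n) (le_of_lt hLx.1) (le_of_lt hLx.2)).1, ?_⟩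
        intro hcon
        rw [mem_singleton_iff] at hcon
        have := hdistj n hn1
        rw [hcon, dist_self] at this
        have : (0:ℝ) < (1/2)^n := by positivity
        linarith
    have hfreq : ∃ᶠ y in 𝓝[closure Ω \ {z}] z, 5/4*Linf ≤ max (u z - u y) 0 / dist z y := by
      apply htendz.frequently
      apply Filter.Eventually.frequently
      filter_upwards [Filter.eventually_ge_atTop (max N 1 + 1)] with n hn
      exact hquotj n hn
    have hge := slope_ge_of_freq hfreq
    rw [huslope z hzΩ] at hge
    have hle := (ENNReal.ofReal_le_ofReal_iff (le_of_lt hLinfpos)).mp hge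
    linarith
  · -- Case ρm < 1/2 : slope at z would be 0
    have hev : ∀ᶠ y in 𝓝[closure Ω \ {z}] z, max (u z - u y) 0 / dist z y ≤ 0 := by
      have hball2 : ∀ᶠ y : ↥Xset in 𝓝 z, dist z y < 1/2 - ρm := by
        filter_upwards [Metric.ball_mem_nhds z (by linarith : (0:ℝ) < 1/2 - ρm)] with y hy
        rw [Metric.mem_ball, dist_comm] at hy
        exact hy
      filter_upwards [hball2.filter_mono nhdsWithin_le_nhds, self_mem_nhdsWithin]
        with y hy1 hy2
      obtain ⟨x', hx'mem, hPhix'⟩ : ∃ x' ∈ Icc (0:ℝ) (1/2), Phi x' = (y : ellOne) := by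
        have hyX : (y : ellOne) ∈ Phi '' Icc (0:ℝ) (1/2) := by
          rw [← Xset_eq]; exact y.2
        obtain ⟨x', hh1, hh2⟩ := hyX
        exact ⟨x', hh1, hh2⟩
      have hyq : y = qmap x' := Subtype.ext (by rw [qmap_eq hx'mem, hPhix'])
      have hdeq : dist z y = dist (Phi (1/2)) (Phi x') := by
        rw [hzq, Subtype.dist_eq, qmap_eq hhalfmem, hPhix']
      have hx'gt : ρm < x' := by
        have hgeabs : |(1/2:ℝ) - x'| ≤ dist (Phi (1/2)) (Phi x') := dist_Phi_ge _ _
        have habs : |(1/2:ℝ) - x'| = 1/2 - x' :=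
          abs_of_nonneg (by linarith [hx'mem.2])
        rw [habs] at hgeabs
        rw [hdeq] at hy1
        linarith
      have hwmono : w (1/2) ≤ w x' :=
        hafter x' (1/2) (le_of_lt hx'gt) hx'mem.2 le_rfl
      have huy : u y = w x' := by rw [hyq]
      have huz : u z = w (1/2) := by rw [hzq]
      have hle0 : u z - u y ≤ 0 := by rw [huy, huz]; linarith
      rw [max_eq_right hle0, zero_div]
    have hle := slope_le_of_ev hev
    rw [huslope z hzΩ] at hle
    have := (ENNReal.ofReal_le_ofReal_iff le_rfl).mp hle
    linarith

/-- The set `X ⊆ ℓ¹(ℕ)` above, with the inherited metric, is compact and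
`2`-quasiconvex, but fails to be eikonal: no slope eikonal equation on an open set containing
`x_∞` with compatible continuous data admits a continuous pointwise solution. -/
theorem stmt12 :
    IsCompact Xset ∧
    (∀ x y : Xset, intrinsicDist x y ≤ ENNReal.ofReal (2 * dist x y)) ∧
    (∀ Ω : Set Xset, IsOpen Ω → Ω.Nonempty → Ω ≠ Set.univ →
      (∃ z : Xset, (z : ellOne) = xInf ∧ z ∈ Ω) →
      ∀ ℓ g : Xset → ℝ, ContinuousOn ℓ Ω → (∃ M, ∀ x ∈ Ω, |ℓ x| ≤ M) →
        (∃ c > 0, ∀ x ∈ Ω, c ≤ ℓ x) → ContinuousOn g (frontier Ω) →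
        SatisfiesCC Ω ℓ g → ¬ ∃ u : Xset → ℝ, IsEikonalSol Ω ℓ g u) := by
  refine ⟨compact_Xset, quasiconvex_Xset, ?_⟩
  intro Ω hΩ hne hnuniv hz ℓ g hℓc hbd hpos hgc hcc
  exact part3 Ω hΩ hz ℓ g hpos hℓc
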